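/- Let A be an m×n complex matrix and B an n×p complex matrix, and let G₁ be a {1}-inverse of A, G₂ a {1}-inverse of B. Set P = Iₙ − G₁A and Q = Iₙ − BG₂, and let H be a {1}-inverse of QP. Then G₂G₁ − G₂P·H·Q·G₁ is a {1}-inverse of AB, i.e. (AB)(G₂G₁ − G₂PHQG₁)(AB) = AB. -/

import Mathlib

/-!
With `P = 1 - G₁A` and `Q = 1 - BG₂` one has `AP = 0` and `QB = 0`, so `ABG₂ = A(1 - Q)` and
`G₁AB = (1 - P)B`. Expanding, `AB·G₂G₁·AB = AB + AQPB` while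
`AB·G₂PHQG₁·AB = AQP·H·QPB = AQPB`, the last step because `H` is a {1}-inverse of `QP`.
-/

namespace Matrix

variable {m n p R : Type*} [Fintype m] [Fintype n] [Fintype p] [DecidableEq n] [Ring R]

/-- `X` is a {1}-inverse (inner inverse) of `M`. -/
def IsInnerInverse (M : Matrix m n R) (X : Matrix n m R) : Prop := M * X * M = M

theorem IsInnerInverse.mul_one_sub_mul_self {A : Matrix m n R} {G : Matrix n m R}
    (h : A.IsInnerInverse G) : A * (1 - G * A) = 0 := by
  rw [Matrix.mul_sub, Matrix.mul_one, ← Matrix.mul_assoc, h, sub_self]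

theorem IsInnerInverse.one_sub_mul_self_mul {B : Matrix n p R} {G : Matrix p n R}
    (h : B.IsInnerInverse G) : (1 - B * G) * B = 0 := by
  rw [Matrix.sub_mul, Matrix.one_mul, h, sub_self]

theorem IsInnerInverse.mul {A : Matrix m n R} {B : Matrix n p R} {G₁ : Matrix n m R}
    {G₂ : Matrix p n R} {H : Matrix n n R} (hA : A.IsInnerInverse G₁) (hB : B.IsInnerInverse G₂)
    (hH : ((1 - B * G₂) * (1 - G₁ * A)).IsInnerInverse H) :
    (A * B).IsInnerInverse (G₂ * G₁ - G₂ * (1 - G₁ * A) * H * (1 - B * G₂) * G₁) := by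
  have hAP := hA.mul_one_sub_mul_self
  have hQB := hB.one_sub_mul_self_mul
  set P := 1 - G₁ * A
  set Q := 1 - B * G₂
  have hABG₂ : A * B * G₂ = A - A * Q := by
    rw [Matrix.mul_sub, Matrix.mul_one, sub_sub_cancel, Matrix.mul_assoc]
  have hG₁AB : G₁ * A * B = B - P * B := by
    rw [Matrix.sub_mul, Matrix.one_mul, sub_sub_cancel]
  have hAQP : (A - A * Q) * P = -(A * (Q * P)) := by
    rw [Matrix.sub_mul, hAP, zero_sub, Matrix.mul_assoc]
  have hQPB : Q * (B - P * B) = -(Q * P * B) := by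
    rw [Matrix.mul_sub, hQB, zero_sub, Matrix.mul_assoc]
  calc A * B * (G₂ * G₁ - G₂ * P * H * Q * G₁) * (A * B)
      = (A * B * G₂) * (G₁ * A * B) - (A * B * G₂) * P * H * Q * (G₁ * A * B) := by
        simp only [Matrix.mul_sub, Matrix.sub_mul, Matrix.mul_assoc]
    _ = (A - A * Q) * (B - P * B) - ((A - A * Q) * P) * H * (Q * (B - P * B)) := by
        rw [hABG₂, hG₁AB]; simp only [Matrix.mul_assoc]
    _ = A * B + A * (Q * P) * B - A * ((Q * P) * H * (Q * P)) * B := by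
        rw [hAQP, hQPB]
        simp only [Matrix.mul_sub, Matrix.sub_mul, Matrix.mul_assoc, Matrix.neg_mul,
          Matrix.mul_neg, neg_neg, hAP, hQB, ← Matrix.mul_assoc A P, Matrix.mul_zero,
          Matrix.zero_mul]
        abel
    _ = A * B := by rw [(hH : Q * P * H * (Q * P) = Q * P), Matrix.mul_assoc A, add_sub_cancel_right]

end Matrix

theorem stmt_5 {m n p : ℕ}
    (A : Matrix (Fin m) (Fin n) ℂ) (B : Matrix (Fin n) (Fin p) ℂ)
    (G₁ : Matrix (Fin n) (Fin m) ℂ) (G₂ : Matrix (Fin p) (Fin n) ℂ)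
    (H : Matrix (Fin n) (Fin n) ℂ)
    (hG₁ : A * G₁ * A = A) (hG₂ : B * G₂ * B = B)
    (hH : ((1 - B * G₂) * (1 - G₁ * A)) * H * ((1 - B * G₂) * (1 - G₁ * A))
        = (1 - B * G₂) * (1 - G₁ * A)) :
    (A * B) * (G₂ * G₁ - G₂ * (1 - G₁ * A) * H * (1 - B * G₂) * G₁) * (A * B) = A * B :=
  Matrix.IsInnerInverse.mul hG₁ hG₂ hH
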